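/- arXiv:1603.06657 — 3 statements merged into one kernel-verified Lean document; each statement's English description precedes it below -/
import Mathlib

section
/- The q-binomial theorem: for 0 < q < 1 and complex a, z with |z| < 1, Σ_{n≥0} ((a; q)_n / (q; q)_n) z^n = (az; q)_∞ / (z; q)_∞. -/
open Complex

/-- Finite q-Pochhammer symbol `(a; q)_n`. -/
noncomputable def qPochN (a q : ℂ) (n : ℕ) : ℂ := ∏ k ∈ Finset.range n, (1 - a * q ^ k)

/-- Infinite q-Pochhammer symbol `(a; q)_∞`. -/
noncomputable def qPochInf (a q : ℂ) : ℂ := ∏' k : ℕ, (1 - a * q ^ k)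

/-!
The coefficients `c n = (a; q)_n / (q; q)_n` satisfy `c (n + 1) (1 - q^(n+1)) = c n (1 - a q^n)`,
which is exactly the functional equation `(1 - w) F(w) = (1 - a w) F(q w)` for the power series
`F(w) = ∑ c n w^n`. Iterating it gives `(z; q)_n F(z) = (a z; q)_n F(q^n z)`, and as `n → ∞` the
left side tends to `(z; q)_∞ F(z)` while `F(q^n z) → F(0) = 1` by dominated convergence.
-/

open Filter Topology

section PowerSeries

variable {𝕜 : Type*} [NormedField 𝕜]

theorem summable_norm_mul_pow_of_tendsto_ratio [CompleteSpace 𝕜] {c ρ : ℕ → 𝕜}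
    (hc : ∀ n, c (n + 1) = ρ n * c n) (hρ : Tendsto ρ atTop (𝓝 1)) {w : 𝕜} (hw : ‖w‖ < 1) :
    Summable fun n ↦ ‖c n * w ^ n‖ := by
  obtain ⟨r, hwr, hr⟩ := exists_between hw
  have hratio : ∀ᶠ n in atTop, ‖ρ n‖ * ‖w‖ < r :=
    (hρ.norm.mul_const ‖w‖).eventually (gt_mem_nhds (by simpa using hwr))
  refine summable_of_ratio_norm_eventually_le hr ?_
  filter_upwards [hratio] with n hn
  simp only [norm_norm, hc, pow_succ, norm_mul, norm_pow]
  calc ‖ρ n‖ * ‖c n‖ * (‖w‖ ^ n * ‖w‖) = ‖ρ n‖ * ‖w‖ * (‖c n‖ * ‖w‖ ^ n) := by ring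
    _ ≤ r * (‖c n‖ * ‖w‖ ^ n) := by gcongr

theorem one_sub_mul_mul_tsum_mul_pow {c : ℕ → 𝕜} {w : 𝕜} (b : 𝕜)
    (hs : Summable fun n ↦ c n * w ^ n) :
    (1 - b * w) * ∑' n, c n * w ^ n = c 0 + ∑' n, (c (n + 1) - b * c n) * w ^ (n + 1) := by
  have hshift : Summable fun n ↦ c (n + 1) * w ^ (n + 1) :=
    (summable_nat_add_iff (f := fun n ↦ c n * w ^ n) 1).mpr hs
  have hmul : Summable fun n ↦ b * c n * w ^ (n + 1) :=
    (hs.mul_left (b * w)).congr fun n ↦ by ring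
  have hsplit : ∑' n, c n * w ^ n = c 0 + ∑' n, c (n + 1) * w ^ (n + 1) := by
    simpa using hs.tsum_eq_zero_add
  have hscale : b * w * ∑' n, c n * w ^ n = ∑' n, b * c n * w ^ (n + 1) := by
    rw [← tsum_mul_left]
    exact tsum_congr fun n ↦ by ring
  simp only [sub_mul, one_mul]
  rw [Summable.tsum_sub hshift hmul, hscale, hsplit]
  ring

theorem tendsto_tsum_mul_pow_of_tendsto_zero {α : Type*} {l : Filter α} [CompleteSpace 𝕜]
    {c : ℕ → 𝕜} {w : 𝕜} (hs : Summable fun m ↦ ‖c m * w ^ m‖) {u : α → 𝕜}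
    (hu : Tendsto u l (𝓝 0)) (hle : ∀ x, ‖u x‖ ≤ ‖w‖) :
    Tendsto (fun x ↦ ∑' m, c m * u x ^ m) l (𝓝 (c 0)) := by
  have h := tendsto_tsum_of_dominated_convergence hs (g := fun m ↦ c m * 0 ^ m)
    (fun m ↦ (hu.pow m).const_mul (c m))
    (Eventually.of_forall fun x m ↦ by simp only [norm_mul, norm_pow]; gcongr; exact hle x)
  simpa [zero_pow_eq] using h

end PowerSeries

section QPochhammer

theorem qPochN_succ (a q : ℂ) (n : ℕ) : qPochN a q (n + 1) = qPochN a q n * (1 - a * q ^ n) :=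
  Finset.prod_range_succ _ n

variable {a q : ℂ}

theorem one_sub_mul_pow_ne_zero (ha : ‖a‖ < 1) (hq : ‖q‖ ≤ 1) (k : ℕ) : 1 - a * q ^ k ≠ 0 := by
  refine sub_ne_zero.mpr fun h ↦ ?_
  have : ‖a * q ^ k‖ < 1 := by
    rw [norm_mul, norm_pow]
    exact mul_lt_one_of_nonneg_of_lt_one_left (norm_nonneg a) ha (pow_le_one₀ (norm_nonneg q) hq)
  simp [← h] at this

theorem summable_norm_mul_pow (a : ℂ) (hq : ‖q‖ < 1) : Summable fun k ↦ ‖-(a * q ^ k)‖ := by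
  simpa only [norm_neg, norm_mul, norm_pow] using
    (summable_geometric_of_lt_one (norm_nonneg q) hq).mul_left ‖a‖

theorem multipliable_one_sub_mul_pow (a : ℂ) (hq : ‖q‖ < 1) :
    Multipliable fun k ↦ 1 - a * q ^ k := by
  simpa only [← sub_eq_add_neg] using multipliable_one_add_of_summable (summable_norm_mul_pow a hq)

theorem tendsto_qPochN (a : ℂ) (hq : ‖q‖ < 1) :
    Tendsto (qPochN a q) atTop (𝓝 (qPochInf a q)) :=
  (multipliable_one_sub_mul_pow a hq).hasProd.tendsto_prod_nat

theorem qPochInf_ne_zero (ha : ‖a‖ < 1) (hq : ‖q‖ < 1) : qPochInf a q ≠ 0 := by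
  rw [qPochInf]
  have h := tprod_one_add_ne_zero_of_summable
    (fun k ↦ by simpa only [← sub_eq_add_neg] using one_sub_mul_pow_ne_zero ha hq.le k)
    (summable_norm_mul_pow a hq)
  simpa only [← sub_eq_add_neg] using h

end QPochhammer

section QBinomialSeries

noncomputable def qBinomialCoeff (a q : ℂ) (n : ℕ) : ℂ := qPochN a q n / qPochN q q n

noncomputable def qBinomialSeries (a q w : ℂ) : ℂ := ∑' n, qBinomialCoeff a q n * w ^ n

theorem qBinomialCoeff_zero (a q : ℂ) : qBinomialCoeff a q 0 = 1 := by
  simp [qBinomialCoeff, qPochN]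

-- No hypothesis is needed: with `x / 0 = 0` both sides vanish when `q ^ (n + 1) = 1`.
theorem qBinomialCoeff_succ (a q : ℂ) (n : ℕ) :
    qBinomialCoeff a q (n + 1) = (1 - a * q ^ n) / (1 - q ^ (n + 1)) * qBinomialCoeff a q n := by
  rw [qBinomialCoeff, qBinomialCoeff, qPochN_succ, qPochN_succ, pow_succ', mul_div_mul_comm,
    mul_comm]

variable {q : ℂ}

theorem qBinomialCoeff_succ_mul_one_sub (a : ℂ) (hq : ‖q‖ < 1) (n : ℕ) :
    qBinomialCoeff a q (n + 1) * (1 - q ^ (n + 1)) = (1 - a * q ^ n) * qBinomialCoeff a q n := by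
  have hden : 1 - q ^ (n + 1) ≠ 0 := by
    simpa only [pow_succ'] using one_sub_mul_pow_ne_zero hq hq.le n
  rw [qBinomialCoeff_succ]
  field_simp

theorem summable_norm_qBinomialCoeff_mul_pow (a : ℂ) (hq : ‖q‖ < 1) {w : ℂ} (hw : ‖w‖ < 1) :
    Summable fun n ↦ ‖qBinomialCoeff a q n * w ^ n‖ := by
  refine summable_norm_mul_pow_of_tendsto_ratio (qBinomialCoeff_succ a q) ?_ hw
  have hpow := tendsto_pow_atTop_nhds_zero_of_norm_lt_one hq
  have hnum := (hpow.const_mul a).const_sub 1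
  have hden := (hpow.comp (tendsto_add_atTop_nat 1)).const_sub 1
  convert hnum.div hden (by simp) using 2 <;> simp

theorem qBinomialSeries_functional_equation (a : ℂ) (hq : ‖q‖ < 1) {w : ℂ} (hw : ‖w‖ < 1) :
    (1 - w) * qBinomialSeries a q w = (1 - a * w) * qBinomialSeries a q (q * w) := by
  have hqw : ‖q * w‖ < 1 := by
    rw [norm_mul]; exact mul_lt_one_of_nonneg_of_lt_one_left (norm_nonneg q) hq hw.le
  set c := qBinomialCoeff a q
  have hs : Summable fun n ↦ c n * w ^ n := (summable_norm_qBinomialCoeff_mul_pow a hq hw).of_norm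
  have hs' : Summable fun n ↦ c n * q ^ n * w ^ n :=
    (summable_norm_qBinomialCoeff_mul_pow a hq hqw).of_norm.congr fun n ↦ by ring
  calc (1 - w) * qBinomialSeries a q w = (1 - 1 * w) * ∑' n, c n * w ^ n := by rw [one_mul]; rfl
    _ = c 0 + ∑' n, (c (n + 1) - 1 * c n) * w ^ (n + 1) := one_sub_mul_mul_tsum_mul_pow 1 hs
    _ = c 0 * q ^ 0 + ∑' n, (c (n + 1) * q ^ (n + 1) - a * (c n * q ^ n)) * w ^ (n + 1) := by
      rw [pow_zero, mul_one]
      congr 1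
      exact tsum_congr fun n ↦ by
        linear_combination w ^ (n + 1) * qBinomialCoeff_succ_mul_one_sub a hq n
    _ = (1 - a * w) * ∑' n, c n * q ^ n * w ^ n := (one_sub_mul_mul_tsum_mul_pow a hs').symm
    _ = (1 - a * w) * qBinomialSeries a q (q * w) := by
      simp only [qBinomialSeries, c, mul_pow, mul_assoc]

theorem qPochN_mul_qBinomialSeries (a : ℂ) (hq : ‖q‖ < 1) {z : ℂ} (hz : ‖z‖ < 1) (n : ℕ) :
    qPochN z q n * qBinomialSeries a q z =
      qPochN (a * z) q n * qBinomialSeries a q (q ^ n * z) := by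
  induction n with
  | zero => simp [qPochN]
  | succ n ih =>
    have hqnz : ‖q ^ n * z‖ < 1 := by
      rw [norm_mul, norm_pow]
      exact mul_lt_one_of_nonneg_of_lt_one_right (pow_le_one₀ (norm_nonneg q) hq.le)
        (norm_nonneg z) hz
    have hfun := qBinomialSeries_functional_equation a hq hqnz
    rw [show q * (q ^ n * z) = q ^ (n + 1) * z by ring] at hfun
    rw [qPochN_succ, qPochN_succ]
    linear_combination (1 - z * q ^ n) * ih + qPochN (a * z) q n * hfun

theorem tendsto_qBinomialSeries_pow_mul (a : ℂ) (hq : ‖q‖ < 1) {z : ℂ} (hz : ‖z‖ < 1) :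
    Tendsto (fun n ↦ qBinomialSeries a q (q ^ n * z)) atTop (𝓝 1) := by
  rw [← qBinomialCoeff_zero a q]
  refine tendsto_tsum_mul_pow_of_tendsto_zero (summable_norm_qBinomialCoeff_mul_pow a hq hz) ?_
    fun n ↦ ?_
  · simpa using (tendsto_pow_atTop_nhds_zero_of_norm_lt_one hq).mul_const z
  · rw [norm_mul, norm_pow]
    exact mul_le_of_le_one_left (norm_nonneg z) (pow_le_one₀ (norm_nonneg q) hq.le)

end QBinomialSeries

theorem q_binomial_theorem (q : ℝ) (a z : ℂ)
    (hq : 0 < q) (hq1 : q < 1) (hz : ‖z‖ < 1) :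
    ∑' n : ℕ, qPochN a (q : ℂ) n / qPochN (q : ℂ) (q : ℂ) n * z ^ n =
      qPochInf (a * z) (q : ℂ) / qPochInf z (q : ℂ) := by
  have hq' : ‖(q : ℂ)‖ < 1 := by
    rw [Complex.norm_real, Real.norm_eq_abs, abs_lt]
    constructor <;> linarith
  have hlim : qPochInf z q * qBinomialSeries a q z = qPochInf (a * z) q * 1 :=
    tendsto_nhds_unique ((tendsto_qPochN z hq').mul_const _)
      (((tendsto_qPochN (a * z) hq').mul (tendsto_qBinomialSeries_pow_mul a hq' hz)).congr
        fun n ↦ (qPochN_mul_qBinomialSeries a hq' hz n).symm)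
  rw [mul_one] at hlim
  rw [eq_div_iff (qPochInf_ne_zero hz hq'), mul_comm]
  exact hlim
end

section
/- For 0 < q < 1 and nonzero complex α, β, w with α β² = −1, one has 1 / [ θ_{q²}(αβ/(q^{1/2} w)) · θ_{q²}(αβ w / q^{1/2}) ] = 2 / [ θ_q(αβ/q^{1/2}) θ_q(w/(αβ²)) + θ_q(w) θ_q(1/(β q^{1/2})) ], provided the denominators are nonzero. -/
open Complex

/-- Jacobi theta function `θ_q(z) = Σ_{n ∈ ℤ} q^(n²/2) (−z)^n`. -/
noncomputable def jacobiTheta' (q : ℝ) (z : ℂ) : ℂ :=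
  ∑' n : ℤ, ((q ^ (((n : ℝ) ^ 2) / 2) : ℝ) : ℂ) * (-z) ^ n

/-! Multiplying out, `θ_q(x) θ_q(-y) + θ_q(y) θ_q(-x)` is the double sum of
`q^((m² + n²)/2) x^m y^n ((-1)^m + (-1)^n)` over `(m, n) ∈ ℤ²`. The terms with `m + n` odd cancel,
and on the rest the substitution `m = r + s`, `n = r - s` gives `m² + n² = 2(r² + s²)` and
`x^m y^n = (x/y)^s (xy)^r`, so the sum is `2 θ_{q²}(x/y) θ_{q²}(xy)`. When `αβ² = -1` and
`x = αβ/√q`, the arguments `w/(αβ²)` and `1/(β√q)` are `-w` and `-x`. -/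

open scoped Real

noncomputable def jacobiTheta'_term (q : ℝ) (z : ℂ) (n : ℤ) : ℂ :=
  ((q ^ (((n : ℝ) ^ 2) / 2) : ℝ) : ℂ) * (-z) ^ n

lemma jacobiTheta'_eq_tsum (q : ℝ) (z : ℂ) : jacobiTheta' q z = ∑' n, jacobiTheta'_term q z n :=
  rfl

lemma jacobiTheta'_term_eq_jacobiTheta₂_term {q : ℝ} (hq : 0 < q) {z : ℂ} (hz : z ≠ 0) (n : ℤ) :
    jacobiTheta'_term q z n =
      jacobiTheta₂_term n (log (-z) / (2 * π * I)) (I * ((-Real.log q / (2 * π) : ℝ) : ℂ)) := by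
  have hexp : 2 * π * I * n * (log (-z) / (2 * π * I)) +
      π * I * n ^ 2 * (I * ((-Real.log q / (2 * π) : ℝ) : ℂ)) =
      ((Real.log q * ((n : ℝ) ^ 2 / 2) : ℝ) : ℂ) + n * log (-z) := by
    push_cast
    field_simp
    linear_combination (-(n ^ 2 * Real.log q)) * I_sq
  rw [jacobiTheta'_term, jacobiTheta₂_term, hexp, exp_add, exp_int_mul,
    exp_log (neg_ne_zero.mpr hz), ← ofReal_exp, Real.rpow_def_of_pos hq]

lemma summable_norm_jacobiTheta'_term {q : ℝ} (hq : 0 < q) (hq1 : q < 1) {z : ℂ} (hz : z ≠ 0) :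
    Summable fun n => ‖jacobiTheta'_term q z n‖ := by
  have him : 0 < (I * ((-Real.log q / (2 * π) : ℝ) : ℂ)).im := by
    simpa only [I_mul_im, ofReal_re] using
      div_pos (neg_pos.mpr (Real.log_neg hq hq1)) Real.two_pi_pos
  simpa only [jacobiTheta'_term_eq_jacobiTheta₂_term hq hz] using
    summable_norm_iff.mpr ((summable_jacobiTheta₂_term_iff _ _).mpr him)

lemma jacobiTheta'_term_mul_add_eq_zero_of_odd (q : ℝ) (x y : ℂ) {m n : ℤ} (hmn : Odd (m + n)) :
    jacobiTheta'_term q x m * jacobiTheta'_term q (-y) n +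
      jacobiTheta'_term q (-x) m * jacobiTheta'_term q y n = 0 := by
  simp only [jacobiTheta'_term, neg_neg]
  rcases Int.even_or_odd m with hm | hm
  · have hn : Odd n := Int.odd_add'.mp hmn |>.mpr hm
    rw [hm.neg_zpow, hn.neg_zpow]
    ring
  · have hn : Even n := Int.odd_add.mp hmn |>.mp hm
    rw [hm.neg_zpow, hn.neg_zpow]
    ring

lemma neg_zpow_add_mul_zpow_sub {x y : ℂ} (hx : x ≠ 0) (hy : y ≠ 0) (r s : ℤ) :
    (-x) ^ (r + s) * y ^ (r - s) = (-(x / y)) ^ s * (-(x * y)) ^ r := by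
  rw [← neg_div, ← neg_mul, div_zpow, mul_zpow, zpow_add₀ (neg_ne_zero.mpr hx), zpow_sub₀ hy]
  ring

lemma rpow_sq_add_mul_rpow_sq_sub {q : ℝ} (hq : 0 < q) (r s : ℝ) :
    q ^ ((r + s) ^ 2 / 2) * q ^ ((r - s) ^ 2 / 2) =
      (q ^ 2) ^ (s ^ 2 / 2) * (q ^ 2) ^ (r ^ 2 / 2) := by
  rw [← Real.rpow_natCast_mul hq.le, ← Real.rpow_natCast_mul hq.le, ← Real.rpow_add hq,
    ← Real.rpow_add hq]
  ring_nf

lemma jacobiTheta'_term_mul_add_add_sub {q : ℝ} (hq : 0 < q) {x y : ℂ} (hx : x ≠ 0) (hy : y ≠ 0)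
    (s r : ℤ) :
    jacobiTheta'_term q x (r + s) * jacobiTheta'_term q (-y) (r - s) +
      jacobiTheta'_term q (-x) (r + s) * jacobiTheta'_term q y (r - s) =
      2 * (jacobiTheta'_term (q ^ 2) (x / y) s * jacobiTheta'_term (q ^ 2) (x * y) r) := by
  have hcoeff := congrArg (fun t : ℝ => (t : ℂ)) (rpow_sq_add_mul_rpow_sq_sub hq r s)
  have hxy := neg_zpow_add_mul_zpow_sub hx hy r s
  have hxy' := neg_zpow_add_mul_zpow_sub (neg_ne_zero.mpr hx) (neg_ne_zero.mpr hy) r s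
  simp only [neg_div_neg_eq, neg_mul_neg, neg_neg] at hxy'
  simp only [jacobiTheta'_term, neg_neg]
  push_cast at hcoeff ⊢
  set a := ((q ^ (((r : ℝ) + s) ^ 2 / 2) : ℝ) : ℂ) * ((q ^ (((r : ℝ) - s) ^ 2 / 2) : ℝ) : ℂ)
  linear_combination a * hxy + a * hxy' + 2 * (-(x / y)) ^ s * (-(x * y)) ^ r * hcoeff

lemma jacobiTheta'_mul_add_mul_neg {q : ℝ} (hq : 0 < q) (hq1 : q < 1) {x y : ℂ} (hx : x ≠ 0)
    (hy : y ≠ 0) :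
    jacobiTheta' q x * jacobiTheta' q (-y) + jacobiTheta' q y * jacobiTheta' q (-x) =
      2 * (jacobiTheta' (q ^ 2) (x / y) * jacobiTheta' (q ^ 2) (x * y)) := by
  have hq2 : 0 < q ^ 2 := by positivity
  have hq21 : q ^ 2 < 1 := pow_lt_one₀ hq.le hq1 two_ne_zero
  have hsum {z : ℂ} (hz : z ≠ 0) := summable_norm_jacobiTheta'_term hq hq1 hz
  have hsum2 {z : ℂ} (hz : z ≠ 0) := summable_norm_jacobiTheta'_term hq2 hq21 hz
  set F : ℤ × ℤ → ℂ := fun p => jacobiTheta'_term q x p.1 * jacobiTheta'_term q (-y) p.2 +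
    jacobiTheta'_term q (-x) p.1 * jacobiTheta'_term q y p.2
  set g : ℤ × ℤ → ℤ × ℤ := fun p => (p.2 + p.1, p.2 - p.1)
  have hg : Function.Injective g := by
    rintro ⟨a, b⟩ ⟨c, d⟩ h
    simp only [g, Prod.mk.injEq] at h ⊢
    omega
  have hF : Function.support F ⊆ Set.range g := by
    rintro ⟨m, n⟩ hmn
    rcases Int.even_or_odd (m + n) with ⟨k, hk⟩ | hodd
    · exact ⟨(k - n, k), by simp only [g, Prod.mk.injEq]; omega⟩
    · exact absurd (jacobiTheta'_term_mul_add_eq_zero_of_odd q x y hodd) hmn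
  rw [mul_comm (jacobiTheta' q y)]
  simp only [jacobiTheta'_eq_tsum]
  rw [tsum_mul_tsum_of_summable_norm (hsum hx) (hsum (neg_ne_zero.mpr hy)),
    tsum_mul_tsum_of_summable_norm (hsum (neg_ne_zero.mpr hx)) (hsum hy),
    tsum_mul_tsum_of_summable_norm (hsum2 (div_ne_zero hx hy)) (hsum2 (mul_ne_zero hx hy)),
    ← Summable.tsum_add (summable_mul_of_summable_norm (hsum hx) (hsum (neg_ne_zero.mpr hy)))
      (summable_mul_of_summable_norm (hsum (neg_ne_zero.mpr hx)) (hsum hy)),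
    ← tsum_mul_left, ← hg.tsum_eq hF]
  exact tsum_congr fun p => jacobiTheta'_term_mul_add_add_sub hq hx hy p.1 p.2

theorem theta_sum_formula_general (q : ℝ) (α β w : ℂ)
    (hq : 0 < q) (hq1 : q < 1) (hw : w ≠ 0)
    (hc : α * β ^ 2 = -1) :
    1 / (jacobiTheta' (q ^ 2) (α * β / ((Real.sqrt q : ℂ) * w)) *
          jacobiTheta' (q ^ 2) (α * β * w / (Real.sqrt q : ℂ))) =
      2 / (jacobiTheta' q (α * β / (Real.sqrt q : ℂ)) * jacobiTheta' q (w / (α * β ^ 2)) +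
            jacobiTheta' q w * jacobiTheta' q (1 / (β * (Real.sqrt q : ℂ)))) := by
  have hαβ2 : α * β ^ 2 ≠ 0 := by rw [hc]; exact neg_ne_zero.mpr one_ne_zero
  have hβ : β ≠ 0 := pow_ne_zero_iff two_ne_zero |>.mp (right_ne_zero_of_mul hαβ2)
  have hαβ : α * β ≠ 0 := mul_ne_zero (left_ne_zero_of_mul hαβ2) hβ
  have hs : (Real.sqrt q : ℂ) ≠ 0 := ofReal_ne_zero.mpr (Real.sqrt_pos.mpr hq).ne'
  have hneg_w : w / (α * β ^ 2) = -w := by rw [hc, div_neg, div_one]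
  have hneg_x : 1 / (β * (Real.sqrt q : ℂ)) = -(α * β / (Real.sqrt q : ℂ)) := by
    field_simp
    linear_combination hc
  rw [div_mul_eq_div_div (α * β), mul_div_right_comm (α * β), hneg_w, hneg_x,
    jacobiTheta'_mul_add_mul_neg hq hq1 (div_ne_zero hαβ hs) hw, div_mul_cancel_left₀ two_ne_zero,
    one_div]

theorem theta_sum_formula (q : ℝ) (α β w : ℂ)
    (hq : 0 < q) (hq1 : q < 1) (hα : α ≠ 0) (hβ : β ≠ 0) (hw : w ≠ 0)
    (hc : α * β ^ 2 = -1)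
    (hd1 : jacobiTheta' (q ^ 2) (α * β / ((Real.sqrt q : ℂ) * w)) *
            jacobiTheta' (q ^ 2) (α * β * w / (Real.sqrt q : ℂ)) ≠ 0)
    (hd2 : jacobiTheta' q (α * β / (Real.sqrt q : ℂ)) * jacobiTheta' q (w / (α * β ^ 2)) +
            jacobiTheta' q w * jacobiTheta' q (1 / (β * (Real.sqrt q : ℂ))) ≠ 0) :
    1 / (jacobiTheta' (q ^ 2) (α * β / ((Real.sqrt q : ℂ) * w)) *
          jacobiTheta' (q ^ 2) (α * β * w / (Real.sqrt q : ℂ))) =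
      2 / (jacobiTheta' q (α * β / (Real.sqrt q : ℂ)) * jacobiTheta' q (w / (α * β ^ 2)) +
            jacobiTheta' q w * jacobiTheta' q (1 / (β * (Real.sqrt q : ℂ)))) :=
  theta_sum_formula_general q α β w hq hq1 hw hc
end

section
/- For complex z with |z| < 1 and real α, the limit as q → 1⁻ of (z q^α; q)_∞ / (z; q)_∞ equals (1 − z)^{−α}. -/
open Complex Filter

/-!
Expanding `log (1 - a q^k) = -∑ₙ (a q^k)ⁿ / n` and summing the geometric series in `k` first gives
`(a; q)_∞ = exp (-∑ₙ aⁿ / (n (1 - qⁿ)))` for `‖a‖, ‖q‖ < 1`. Hence the ratio equals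
`exp (∑ₙ zⁿ / n · (1 - (qⁿ)^α) / (1 - qⁿ))`. Each difference quotient tends to `α`, the derivative
of `t ↦ t^α` at `1`, and by the mean value theorem it is bounded by `|α| q^(-n (|α| + 1))`, so
dominated convergence gives the limit `exp (-α log (1 - z)) = (1 - z)^(-α)`.
-/

open Topology Set

lemma norm_div_natCast_le {𝕜 : Type*} [RCLike 𝕜] (x : 𝕜) (n : ℕ) : ‖x / n‖ ≤ ‖x‖ := by
  rcases n.eq_zero_or_pos with rfl | hn
  · simp
  · rw [norm_div, RCLike.norm_natCast]
    exact div_le_self (norm_nonneg x) (by exact_mod_cast hn)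

section LogExpansion

variable {a w z q : ℂ}

lemma summable_mul_pow_pow_div (ha : ‖a‖ < 1) (hq : ‖q‖ < 1) :
    Summable (fun p : ℕ × ℕ => (a * q ^ p.1) ^ p.2 / p.2) := by
  refine .of_norm_bounded (g := fun p : ℕ × ℕ => ‖q‖ ^ p.1 * ‖a‖ ^ p.2)
    ((summable_geometric_of_lt_one (norm_nonneg q) hq).mul_of_nonneg
      (summable_geometric_of_lt_one (norm_nonneg a) ha) (fun _ => by positivity)
      (fun _ => by positivity)) ?_
  rintro ⟨k, n⟩
  rcases n.eq_zero_or_pos with rfl | hn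
  · simp only [CharP.cast_eq_zero, div_zero, norm_zero]
    positivity
  calc ‖(a * q ^ k) ^ n / n‖ ≤ ‖a‖ ^ n * (‖q‖ ^ k) ^ n := by
        simpa [mul_pow] using norm_div_natCast_le ((a * q ^ k) ^ n) n
    _ ≤ ‖a‖ ^ n * ‖q‖ ^ k := by
        gcongr
        exact pow_le_of_le_one (by positivity) (pow_le_one₀ (norm_nonneg q) hq.le) hn.ne'
    _ = ‖q‖ ^ k * ‖a‖ ^ n := mul_comm _ _

lemma hasSum_mul_pow_pow_div (hq : ‖q‖ < 1) (n : ℕ) :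
    HasSum (fun k : ℕ => (a * q ^ k) ^ n / n) (a ^ n / (n * (1 - q ^ n))) := by
  rcases n.eq_zero_or_pos with rfl | hn
  · simp
  have hqn : ‖q ^ n‖ < 1 := by
    rw [norm_pow]; exact pow_lt_one₀ (norm_nonneg q) hq hn.ne'
  rw [← div_div, div_eq_mul_inv _ (1 - q ^ n)]
  have hterm : ∀ k : ℕ, (a * q ^ k) ^ n / n = a ^ n / n * (q ^ n) ^ k := fun k => by
    rw [mul_pow, ← pow_mul, ← pow_mul, mul_comm k n]; ring
  simpa only [hterm] using (hasSum_geometric_of_norm_lt_one hqn).mul_left (a ^ n / n)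

lemma norm_mul_pow_lt_one (ha : ‖a‖ < 1) (hq : ‖q‖ ≤ 1) (k : ℕ) : ‖a * q ^ k‖ < 1 := by
  rw [norm_mul, norm_pow]
  exact (mul_le_of_le_one_right (norm_nonneg a) (pow_le_one₀ (norm_nonneg q) hq)).trans_lt ha

lemma hasSum_pow_div_mul_one_sub_pow (ha : ‖a‖ < 1) (hq : ‖q‖ < 1) :
    HasSum (fun n : ℕ => a ^ n / (n * (1 - q ^ n))) (-∑' k : ℕ, log (1 - a * q ^ k)) := by
  obtain ⟨S, hS⟩ := summable_mul_pow_pow_div ha hq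
  have hrows : HasSum (fun k : ℕ => -log (1 - a * q ^ k)) S :=
    hS.prod_fiberwise fun k => (hasSum_taylorSeries_neg_log (norm_mul_pow_lt_one ha hq.le k) :)
  have hcols : HasSum (fun n : ℕ => a ^ n / (n * (1 - q ^ n))) S :=
    ((Equiv.prodComm ℕ ℕ).hasSum_iff.mpr hS).prod_fiberwise fun n => (hasSum_mul_pow_pow_div hq n :)
  rwa [← tsum_neg, hrows.tsum_eq]

lemma qPochInf_eq_exp (ha : ‖a‖ < 1) (hq : ‖q‖ < 1) :
    qPochInf a q = exp (-∑' n : ℕ, a ^ n / (n * (1 - q ^ n))) := by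
  have hne : ∀ k : ℕ, 1 - a * q ^ k ≠ 0 := fun k h => by
    simpa [← sub_eq_zero.mp h] using norm_mul_pow_lt_one ha hq.le k
  have hlog : Summable fun k : ℕ => log (1 - a * q ^ k) := by
    simpa only [sub_eq_add_neg, neg_mul] using Complex.summable_log_one_add_of_summable
      ((summable_geometric_of_norm_lt_one hq).mul_left (-a))
  rw [(hasSum_pow_div_mul_one_sub_pow ha hq).tsum_eq, neg_neg, qPochInf,
    Complex.cexp_tsum_eq_tprod hne hlog]

lemma qPochInf_div_qPochInf (hw : ‖w‖ < 1) (hz : ‖z‖ < 1) (hq : ‖q‖ < 1) :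
    qPochInf w q / qPochInf z q = exp (∑' n : ℕ, (z ^ n - w ^ n) / (n * (1 - q ^ n))) := by
  rw [qPochInf_eq_exp hw hq, qPochInf_eq_exp hz hq, ← exp_sub, neg_sub_neg]
  simp_rw [sub_div]
  rw [← (hasSum_pow_div_mul_one_sub_pow hz hq).summable.tsum_sub
      (hasSum_pow_div_mul_one_sub_pow hw hq).summable]

end LogExpansion

lemma abs_slope_rpow_one_le {α t : ℝ} (ht0 : 0 < t) (ht1 : t ≤ 1) :
    |slope (fun x : ℝ => x ^ α) 1 t| ≤ |α| * t ^ (-(|α| + 1)) := by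
  rcases ht1.eq_or_lt with rfl | ht1
  · simp only [slope_same, abs_zero]
    positivity
  obtain ⟨ξ, ⟨htξ, hξ1⟩, hξ⟩ := exists_hasDerivAt_eq_slope (fun x : ℝ => x ^ α)
    (fun x => α * x ^ (α - 1)) ht1
    (fun x hx => (Real.continuousAt_rpow_const x α
      (Or.inl (ht0.trans_le hx.1).ne')).continuousWithinAt)
    (fun x hx => Real.hasDerivAt_rpow_const (Or.inl (ht0.trans hx.1).ne'))
  have hξ0 : 0 < ξ := ht0.trans htξ
  rw [slope_comm, slope_def_field, ← hξ, abs_mul, abs_of_pos (Real.rpow_pos_of_pos hξ0 _)]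
  gcongr
  calc ξ ^ (α - 1) ≤ ξ ^ (-(|α| + 1)) :=
        Real.rpow_le_rpow_of_exponent_ge hξ0 hξ1.le (by linarith [neg_abs_le α])
    _ ≤ t ^ (-(|α| + 1)) := Real.rpow_le_rpow_of_nonpos ht0 htξ.le (by linarith [abs_nonneg α])

lemma tendsto_slope_rpow_one (α : ℝ) :
    Tendsto (slope (fun x : ℝ => x ^ α) 1) (𝓝[≠] 1) (𝓝 α) := by
  simpa using hasDerivAt_iff_tendsto_slope.mp
    (Real.hasDerivAt_rpow_const (x := 1) (p := α) (Or.inl one_ne_zero))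

lemma tendsto_slope_rpow_one_pow (α : ℝ) {n : ℕ} (hn : n ≠ 0) :
    Tendsto (fun q : ℝ => slope (fun x : ℝ => x ^ α) 1 (q ^ n)) (𝓝[Ioo 0 1] 1) (𝓝 α) :=
  (tendsto_slope_rpow_one α).comp <| tendsto_nhdsWithin_iff.mpr
    ⟨((continuous_pow n).tendsto' 1 1 (one_pow n)).mono_left nhdsWithin_le_nhds,
      eventually_nhdsWithin_of_forall fun _ hq => (pow_lt_one₀ hq.1.le hq.2 hn).ne⟩

lemma sub_mul_rpow_pow_div (z : ℂ) {q : ℝ} (hq : 0 ≤ q) (α : ℝ) (n : ℕ) :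
    (z ^ n - (z * ((q ^ α : ℝ) : ℂ)) ^ n) / (n * (1 - (q : ℂ) ^ n)) =
      z ^ n / n * (slope (fun x : ℝ => x ^ α) 1 (q ^ n) : ℂ) := by
  rw [slope_def_field, Real.one_rpow, ← Real.rpow_pow_comm hq, ← neg_sub ((q : ℂ) ^ n) 1]
  push_cast
  rw [mul_neg, div_neg, div_mul_eq_div_div]
  ring

lemma tendsto_tsum_pow_div_mul_slope_rpow {z : ℂ} (hz : ‖z‖ < 1) (α : ℝ) :
    Tendsto (fun q : ℝ => ∑' n : ℕ, z ^ n / n * (slope (fun x : ℝ => x ^ α) 1 (q ^ n) : ℂ))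
      (𝓝[Ioo 0 1] 1) (𝓝 (-log (1 - z) * α)) := by
  obtain ⟨ρ, hzρ, hρ⟩ := exists_between hz
  have hρ_eventually : ∀ᶠ q : ℝ in 𝓝[Ioo 0 1] 1, ‖z‖ * q ^ (-(|α| + 1)) < ρ := by
    refine nhdsWithin_le_nhds (ContinuousAt.eventually_lt ?_ continuousAt_const ?_)
    · exact continuousAt_const.mul (Real.continuousAt_rpow_const 1 _ (Or.inl one_ne_zero))
    · simpa only [Real.one_rpow, mul_one] using hzρ
  rw [← ((hasSum_taylorSeries_neg_log hz).mul_right (α : ℂ)).tsum_eq]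
  refine tendsto_tsum_of_dominated_convergence (bound := fun n => |α| * ρ ^ n)
    ((summable_geometric_of_lt_one ((norm_nonneg z).trans hzρ.le) hρ).mul_left _) (fun n => ?_) ?_
  · rcases eq_or_ne n 0 with rfl | hn
    · simp
    · exact ((continuous_ofReal.tendsto α).comp (tendsto_slope_rpow_one_pow α hn)).const_mul _
  · filter_upwards [self_mem_nhdsWithin, hρ_eventually] with q ⟨hq0, hq1⟩ hqρ n
    have hslope := abs_slope_rpow_one_le (α := α) (pow_pos hq0 n) (pow_le_one₀ hq0.le hq1.le)
    rw [← Real.rpow_pow_comm hq0.le] at hslope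
    calc ‖z ^ n / n * (slope (fun x : ℝ => x ^ α) 1 (q ^ n) : ℂ)‖
        ≤ ‖z‖ ^ n * |slope (fun x : ℝ => x ^ α) 1 (q ^ n)| := by
          rw [div_mul_eq_mul_div, ← norm_pow, ← Real.norm_eq_abs, ← norm_real, ← norm_mul]
          exact norm_div_natCast_le _ n
      _ ≤ ‖z‖ ^ n * (|α| * (q ^ (-(|α| + 1))) ^ n) := by gcongr
      _ = |α| * (‖z‖ * q ^ (-(|α| + 1))) ^ n := by ring
      _ ≤ |α| * ρ ^ n := by gcongr

theorem qPochInf_ratio_limit (z : ℂ) (α : ℝ) (hz : ‖z‖ < 1) :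
    Tendsto
      (fun q : ℝ => qPochInf (z * ((q ^ α : ℝ) : ℂ)) (q : ℂ) / qPochInf z (q : ℂ))
      (nhdsWithin 1 (Set.Ioo 0 1))
      (nhds ((1 - z) ^ ((-α : ℝ) : ℂ))) := by
  have hz1 : 1 - z ≠ 0 := sub_ne_zero.mpr (by rintro rfl; simp at hz)
  have hlim : exp (-log (1 - z) * α) = (1 - z) ^ ((-α : ℝ) : ℂ) := by
    rw [cpow_def_of_ne_zero hz1, ofReal_neg, mul_neg, neg_mul]
  have hsmall : ∀ᶠ q : ℝ in 𝓝[Ioo 0 1] 1, ‖z * ((q ^ α : ℝ) : ℂ)‖ < 1 := by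
    refine nhdsWithin_le_nhds (ContinuousAt.eventually_lt ?_ continuousAt_const ?_)
    · exact (continuousAt_const.mul (continuous_ofReal.continuousAt.comp
        (Real.continuousAt_rpow_const 1 α (Or.inl one_ne_zero)))).norm
    · simpa using hz
  rw [← hlim]
  refine ((continuous_exp.tendsto _).comp (tendsto_tsum_pow_div_mul_slope_rpow hz α)).congr' ?_
  filter_upwards [self_mem_nhdsWithin, hsmall] with q ⟨hq0, _⟩ hzq
  have hq : ‖(q : ℂ)‖ < 1 := by rwa [norm_real, Real.norm_of_nonneg hq0.le]
  rw [Function.comp_apply, qPochInf_div_qPochInf hzq hz hq]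
  simp_rw [sub_mul_rpow_pow_div z hq0.le α]
end
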